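/- (Monotonicity of unnormalized Rademacher complexity over distributions) For any integers 0 ≤ n ≤ m and any distribution D, n·R_n(F, D) ≤ m·R_m(F, D), where R_m(F, D) = E_{S∼D^m}[R̂_S(F)]. -/

import Mathlib

open scoped BigOperators
open MeasureTheory

/-- Sign of a Rademacher variable encoded as a Boolean. -/
noncomputable def rsign (b : Bool) : ℝ := if b then 1 else -1

/-- Empirical Rademacher complexity of a family `F` with respect to a sample. -/
noncomputable def empRad {X : Type*} (F : Set (X → ℝ)) (m : ℕ) (x : Fin m → X) : ℝ :=
  (∑ η : Fin m → Bool,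
    sSup {r : ℝ | ∃ f ∈ F, r = (1 / (m : ℝ)) * ∑ i, rsign (η i) * f (x i)}) / 2 ^ m

/-- Rademacher complexity of `F` over `m` i.i.d. samples drawn from `D`. -/
noncomputable def Rad {X : Type*} [MeasurableSpace X] (F : Set (X → ℝ)) (m : ℕ)
    (D : Measure X) : ℝ :=
  ∫ x : Fin m → X, empRad F m x ∂(Measure.pi fun _ : Fin m => D)

/-!
Clearing the factor `1 / m`, `m · R̂_S(F)` is the average over sign vectors `η` of
`sup_f ∑ i, η i * f (x i)`. Grouping the sign vectors in pairs that differ only in the first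
coordinate, `sup_f (f x₀ + s f) + sup_f (-f x₀ + s f) ≥ 2 sup_f s f`, so this unnormalized
empirical complexity can only grow when a point is prepended to the sample. Dropping the first
coordinate pushes `D^(m+1)` forward to `D^m`, so integrating gives `m R_m ≤ (m + 1) R_(m+1)`.
-/

open scoped Pointwise

theorem Fin.sum_pi_succ {M α : Type*} [AddCommMonoid M] [Fintype α] (m : ℕ)
    (g : (Fin (m + 1) → α) → M) : ∑ η, g η = ∑ a, ∑ η : Fin m → α, g (Fin.cons a η) := by
  rw [← (Fin.consEquiv fun _ => α).sum_comp, Fintype.sum_prod_type]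
  rfl

theorem two_mul_csSup_image_le {ι : Type*} {s : Set ι} (hs : s.Nonempty) (a b : ι → ℝ)
    (hplus : BddAbove ((fun i => a i + b i) '' s))
    (hminus : BddAbove ((fun i => -a i + b i) '' s)) :
    2 * sSup (b '' s) ≤ sSup ((fun i => a i + b i) '' s) + sSup ((fun i => -a i + b i) '' s) := by
  suffices sSup (b '' s) ≤
      (sSup ((fun i => a i + b i) '' s) + sSup ((fun i => -a i + b i) '' s)) / 2 by linarith
  refine csSup_le (hs.image b) ?_
  rintro _ ⟨i, hi, rfl⟩
  have h₁ := le_csSup hplus ⟨i, hi, rfl⟩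
  have h₂ := le_csSup hminus ⟨i, hi, rfl⟩
  dsimp only at h₁ h₂
  linarith

section Rademacher

variable {X : Type*}

@[simp] theorem rsign_true : rsign true = 1 := rfl

@[simp] theorem rsign_false : rsign false = -1 := rfl

theorem abs_rsign (b : Bool) : |rsign b| = 1 := by cases b <;> simp [rsign]

noncomputable def rademacherSum {m : ℕ} (x : Fin m → X) (η : Fin m → Bool) (f : X → ℝ) : ℝ :=
  ∑ i, rsign (η i) * f (x i)

/-- `m · empRad F m x`, but without the division by `m`, which is junk at `m = 0`. -/
noncomputable def unnormEmpRad (F : Set (X → ℝ)) (m : ℕ) (x : Fin m → X) : ℝ :=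
  (∑ η : Fin m → Bool, sSup (rademacherSum x η '' F)) / 2 ^ m

theorem rademacherSum_cons {m : ℕ} (x : Fin (m + 1) → X) (b : Bool) (η : Fin m → Bool)
    (f : X → ℝ) :
    rademacherSum x (Fin.cons b η) f = rsign b * f (x 0) + rademacherSum (Fin.tail x) η f := by
  simp [rademacherSum, Fin.sum_univ_succ, Fin.tail]

theorem bddAbove_rademacherSum_image {F : Set (X → ℝ)} {C : ℝ}
    (hbdd : ∀ f ∈ F, ∀ x : X, |f x| ≤ C) {m : ℕ} (x : Fin m → X) (η : Fin m → Bool) :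
    BddAbove (rademacherSum x η '' F) := by
  refine ⟨m * C, ?_⟩
  rintro _ ⟨f, hf, rfl⟩
  calc rademacherSum x η f ≤ ∑ i, |rsign (η i) * f (x i)| :=
        Finset.sum_le_sum fun i _ => le_abs_self _
    _ ≤ ∑ _i : Fin m, C := Finset.sum_le_sum fun i _ => by
        rw [abs_mul, abs_rsign, one_mul]; exact hbdd f hf (x i)
    _ = m * C := by simp

theorem natCast_mul_empRad {F : Set (X → ℝ)} (hF : F.Nonempty) (m : ℕ) (x : Fin m → X) :
    m * empRad F m x = unnormEmpRad F m x := by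
  rcases Nat.eq_zero_or_pos m with rfl | hm
  · have hzero : ∀ η, rademacherSum x η = fun _ => 0 := fun η => funext fun f => by
      simp [rademacherSum]
    simp [unnormEmpRad, hzero, hF.image_const]
  have hset : ∀ η : Fin m → Bool,
      {r : ℝ | ∃ f ∈ F, r = (1 / (m : ℝ)) * ∑ i, rsign (η i) * f (x i)}
        = (1 / (m : ℝ)) • (rademacherSum x η '' F) := by
    intro η
    ext r
    simp [Set.mem_smul_set, rademacherSum, eq_comm]
  simp only [empRad, unnormEmpRad, hset, smul_eq_mul, ← Finset.mul_sum,
    Real.sSup_smul_of_nonneg (by positivity : (0 : ℝ) ≤ 1 / m)]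
  field_simp

theorem unnormEmpRad_tail_le {F : Set (X → ℝ)} (hF : F.Nonempty) {C : ℝ}
    (hbdd : ∀ f ∈ F, ∀ x : X, |f x| ≤ C) {m : ℕ} (x : Fin (m + 1) → X) :
    unnormEmpRad F m (Fin.tail x) ≤ unnormEmpRad F (m + 1) x := by
  have hpair : ∀ η : Fin m → Bool, 2 * sSup (rademacherSum (Fin.tail x) η '' F) ≤
      sSup (rademacherSum x (Fin.cons true η) '' F)
        + sSup (rademacherSum x (Fin.cons false η) '' F) := by
    intro η
    have hplus := bddAbove_rademacherSum_image hbdd x (Fin.cons true η)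
    have hminus := bddAbove_rademacherSum_image hbdd x (Fin.cons false η)
    simp only [rademacherSum_cons, rsign_true, rsign_false, one_mul, neg_one_mul] at hplus hminus ⊢
    exact two_mul_csSup_image_le hF _ _ hplus hminus
  have hsum : 2 * ∑ η : Fin m → Bool, sSup (rademacherSum (Fin.tail x) η '' F) ≤
      ∑ η : Fin (m + 1) → Bool, sSup (rademacherSum x η '' F) := by
    rw [Fin.sum_pi_succ, Fintype.sum_bool, ← Finset.sum_add_distrib, Finset.mul_sum]
    exact Finset.sum_le_sum fun η _ => hpair η
  rw [unnormEmpRad, unnormEmpRad, pow_succ, div_le_div_iff₀ (by positivity) (by positivity)]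
  nlinarith [pow_pos (two_pos : (0 : ℝ) < 2) m]

theorem integral_unnormEmpRad_le_succ [MeasurableSpace X] {F : Set (X → ℝ)} (hF : F.Nonempty)
    {C : ℝ} (hbdd : ∀ f ∈ F, ∀ x : X, |f x| ≤ C) (D : Measure X) [IsProbabilityMeasure D]
    {m : ℕ} (hint : Integrable (unnormEmpRad F m) (Measure.pi fun _ : Fin m => D))
    (hint_succ : Integrable (unnormEmpRad F (m + 1)) (Measure.pi fun _ : Fin (m + 1) => D)) :
    ∫ x, unnormEmpRad F m x ∂(Measure.pi fun _ => D) ≤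
      ∫ x, unnormEmpRad F (m + 1) x ∂(Measure.pi fun _ => D) := by
  have htail : MeasurePreserving (Fin.tail : (Fin (m + 1) → X) → (Fin m → X))
      (Measure.pi fun _ => D) (Measure.pi fun _ => D) :=
    measurePreserving_snd.comp (measurePreserving_piFinSuccAbove (fun _ => D) 0)
  calc ∫ x, unnormEmpRad F m x ∂(Measure.pi fun _ => D)
      = ∫ x, unnormEmpRad F m (Fin.tail x) ∂(Measure.pi fun _ => D) := by
        rw [← htail.map_eq, integral_map htail.measurable.aemeasurable
          (htail.map_eq ▸ hint.aestronglyMeasurable)]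
    _ ≤ ∫ x, unnormEmpRad F (m + 1) x ∂(Measure.pi fun _ => D) :=
        integral_mono ((htail.integrable_comp hint.aestronglyMeasurable).2 hint) hint_succ
          fun x => unnormEmpRad_tail_le hF hbdd x

theorem natCast_mul_Rad [MeasurableSpace X] {F : Set (X → ℝ)} (hF : F.Nonempty) (m : ℕ)
    (D : Measure X) :
    m * Rad F m D = ∫ x, unnormEmpRad F m x ∂(Measure.pi fun _ => D) := by
  simp only [Rad, ← integral_const_mul, natCast_mul_empRad hF]

end Rademacher

/-- Monotonicity of the unnormalized Rademacher complexity over distributions: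
for `n ≤ m`, `n · R_n(F, D) ≤ m · R_m(F, D)`. -/
theorem rad_unnormalized_mono {X : Type*} [MeasurableSpace X]
    (F : Set (X → ℝ)) (hF : F.Nonempty)
    (C : ℝ) (hbdd : ∀ f ∈ F, ∀ x : X, |f x| ≤ C)
    (D : Measure X) [IsProbabilityMeasure D]
    (hmeas : ∀ k : ℕ, Integrable (empRad F k) (Measure.pi fun _ : Fin k => D))
    (n m : ℕ) (hnm : n ≤ m) :
    (n : ℝ) * Rad F n D ≤ (m : ℝ) * Rad F m D := by
  have hint : ∀ k : ℕ, Integrable (unnormEmpRad F k) (Measure.pi fun _ : Fin k => D) :=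
    fun k => by simpa only [natCast_mul_empRad hF] using (hmeas k).const_mul (k : ℝ)
  induction m, hnm using Nat.le_induction with
  | base => exact le_rfl
  | succ k _ ih =>
    refine ih.trans ?_
    rw [natCast_mul_Rad hF, natCast_mul_Rad hF]
    exact integral_unnormEmpRad_le_succ hF hbdd D (hint k) (hint (k + 1))
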